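/- arXiv:2004.03522 — 4 statements merged into one kernel-verified Lean document; each statement's English description precedes it below -/
import Mathlib

section
/- Assume 1 + a_2 + ⋯ + a_n ≥ 2r. Then there is no vector q ∈ N' such that all coordinates of q are nonnegative, the coordinates of q sum to 1 (i.e. q has age 1), and the ℤ-span of {q, e_2, …, e_n} equals N'. (This is the key lattice-theoretic claim in the proof that ℂⁿ/⟨(1/r)(1, a_2, …, a_n)⟩ admits no toric crepant resolution when the age of the generator is at least 2.) -/
def intLattice (n : ℕ) : Submodule ℤ (Fin n → ℚ) where
  carrier := {x | ∀ i, ∃ z : ℤ, x i = z}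
  add_mem' := by
    rintro x y hx hy i
    obtain ⟨p, hp⟩ := hx i; obtain ⟨s, hs⟩ := hy i
    exact ⟨p + s, by simp [hp, hs]⟩
  zero_mem' := fun i => ⟨0, by simp⟩
  smul_mem' := by
    rintro c x hx i
    obtain ⟨p, hp⟩ := hx i
    exact ⟨c * p, by simp [hp, zsmul_eq_mul]⟩

lemma coordZero_of_mem {n : ℕ} {x : Fin (n+2) → ℚ}
    (hx : x ∈ Submodule.span ℤ
      ((fun j : Fin (n+2) => (Pi.single j 1 : Fin (n+2) → ℚ)) '' {j | j ≠ 0})) :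
    x 0 = 0 := by
  have hle : Submodule.span ℤ
      ((fun j : Fin (n+2) => (Pi.single j 1 : Fin (n+2) → ℚ)) '' {j | j ≠ 0}) ≤
      LinearMap.ker ((LinearMap.proj 0 : (Fin (n+2) → ℚ) →ₗ[ℚ] ℚ).restrictScalars ℤ) := by
    rw [Submodule.span_le]
    rintro _ ⟨j, hj, rfl⟩
    simp only [SetLike.mem_coe, LinearMap.mem_ker, LinearMap.restrictScalars_apply,
      LinearMap.proj_apply]
    exact Pi.single_eq_of_ne (Ne.symm hj) 1
  simpa using hle hx

lemma intCoords_of_mem {n : ℕ} {x : Fin n → ℚ}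
    (hx : x ∈ Submodule.span ℤ (Set.range fun j : Fin n => (Pi.single j 1 : Fin n → ℚ))) :
    ∀ i, ∃ z : ℤ, x i = z := by
  have hle : Submodule.span ℤ (Set.range fun j : Fin n => (Pi.single j 1 : Fin n → ℚ)) ≤
      intLattice n := by
    rw [Submodule.span_le]
    rintro _ ⟨j, rfl⟩ i
    exact ⟨if i = j then 1 else 0, by simp [Pi.single_apply]⟩
  exact hle hx

/-- Let `N' = ℤe_1 + ⋯ + ℤe_n + ℤ·(1/r)(1, a_2, …, a_n) ⊆ ℚⁿ` where
`n ≥ 2` (written `n = m + 2`), `a_1 = 1` and `0 ≤ a_j ≤ r − 1`.  If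
`1 + a_2 + ⋯ + a_n ≥ 2r`, then there is no `q ∈ N'` with all coordinates nonnegative,
coordinate sum `1` (age one), and such that the `ℤ`-span of `{q, e_2, …, e_n}`
equals `N'`. -/
theorem no_age_one_basis_vector_of_age_ge_two
    {m : ℕ} (r : ℕ) (hr : 1 ≤ r) (a : Fin (m + 2) → ℕ)
    (ha0 : a 0 = 1) (ha : ∀ j, a j < r)
    (hage : 2 * r ≤ ∑ j, a j) :
    ¬ ∃ q : Fin (m + 2) → ℚ,
      q ∈ Submodule.span ℤ (insert (fun j => (a j : ℚ) / r)
            (Set.range fun j : Fin (m + 2) => (Pi.single j 1 : Fin (m + 2) → ℚ))) ∧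
      (∀ j, 0 ≤ q j) ∧ (∑ j, q j) = 1 ∧
      Submodule.span ℤ
          (insert q ((fun j : Fin (m + 2) => (Pi.single j 1 : Fin (m + 2) → ℚ)) '' {j | j ≠ 0}))
        = Submodule.span ℤ (insert (fun j => (a j : ℚ) / r)
            (Set.range fun j : Fin (m + 2) => (Pi.single j 1 : Fin (m + 2) → ℚ))) := by
  rintro ⟨q, hqN, hq0, hqsum, hspan⟩
  have hrQ : (0:ℚ) < r := by exact_mod_cast hr
  -- Step 1: g lies in the span of {q, e_j (j ≠ 0)}, so 1/r = c * q 0.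
  have hg : (fun j => (a j : ℚ)/r) ∈ Submodule.span ℤ
      (insert q ((fun j : Fin (m+2) => (Pi.single j 1 : Fin (m+2) → ℚ)) '' {j | j ≠ 0})) := by
    rw [hspan]; exact Submodule.subset_span (Set.mem_insert _ _)
  rw [Submodule.mem_span_insert] at hg
  obtain ⟨c, z, hz, hgz⟩ := hg
  have hz0 : z 0 = 0 := coordZero_of_mem hz
  have h1 : (1:ℚ)/r = c * q 0 := by
    have h := congrFun hgz 0
    simp only [Pi.add_apply, Pi.smul_apply, zsmul_eq_mul, hz0, add_zero, ha0,
      Nat.cast_one] at h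
    exact h
  -- Step 2: q ∈ N', write q = k • g + v with v integral.
  rw [Submodule.mem_span_insert] at hqN
  obtain ⟨k, v, hv, hqv⟩ := hqN
  choose zv hzv using intCoords_of_mem hv
  have hq0eq : q 0 = (k:ℚ)/r + zv 0 := by
    have h := congrFun hqv 0
    simp only [Pi.add_apply, Pi.smul_apply] at h
    simp only [zsmul_eq_mul, ha0, Nat.cast_one, hzv 0] at h
    rw [h]; ring
  -- q 0 > 0 and c > 0
  have hq0ne : q 0 ≠ 0 := by
    intro h0
    rw [h0, mul_zero] at h1
    exact (one_div_ne_zero (ne_of_gt hrQ)) h1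
  have hq0pos : 0 < q 0 := lt_of_le_of_ne (hq0 0) (Ne.symm hq0ne)
  have hcpos : (0:ℚ) < c := by
    rcases lt_trichotomy (c:ℚ) 0 with h | h | h
    · nlinarith [one_div_pos.mpr hrQ]
    · rw [h, zero_mul] at h1; exact absurd h1 (one_div_ne_zero (ne_of_gt hrQ))
    · exact h
  -- key integer equation
  have key : (c:ℚ) * ((k:ℚ) + r * zv 0) = 1 := by
    rw [hq0eq] at h1
    field_simp at h1
    nlinarith [h1]
  have keyZ : c * (k + r * zv 0) = 1 := by exact_mod_cast key
  have hc1 : c = 1 := by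
    have hcZ : 0 < c := by exact_mod_cast hcpos
    have hcd : c ∣ 1 := ⟨_, keyZ.symm⟩
    have := Int.le_of_dvd one_pos hcd
    omega
  have hk : (k:ℚ) = 1 - r * zv 0 := by
    rw [hc1, one_mul] at keyZ
    have : (k:ℚ) + r * zv 0 = 1 := by exact_mod_cast keyZ
    linarith
  -- coordinates of q
  have hqj : ∀ j, q j = (a j : ℚ)/r + ((zv j - zv 0 * a j : ℤ) : ℚ) := by
    intro j
    have h := congrFun hqv j
    simp only [Pi.add_apply, Pi.smul_apply] at h
    simp only [zsmul_eq_mul, hzv j] at h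
    rw [h, hk]
    push_cast
    field_simp
    ring
  have hwpos : ∀ j, (0:ℚ) ≤ ((zv j - zv 0 * a j : ℤ) : ℚ) := by
    intro j
    have hqjge := hq0 j
    rw [hqj j] at hqjge
    have haj : (a j : ℚ)/r < 1 := by
      rw [div_lt_one hrQ]
      exact_mod_cast ha j
    have hgt : (-1:ℚ) < ((zv j - zv 0 * a j : ℤ) : ℚ) := by linarith
    have : (-1:ℤ) < zv j - zv 0 * a j := by exact_mod_cast hgt
    have : (0:ℤ) ≤ zv j - zv 0 * a j := by omega
    exact_mod_cast this
  -- sum up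
  have hsum : (∑ j, q j) = (∑ j, (a j : ℚ))/r + ∑ j, ((zv j - zv 0 * a j : ℤ) : ℚ) := by
    calc ∑ j, q j = ∑ j, ((a j : ℚ)/r + ((zv j - zv 0 * a j : ℤ) : ℚ)) :=
          Finset.sum_congr rfl (fun j _ => hqj j)
      _ = (∑ j, (a j : ℚ)/r) + ∑ j, ((zv j - zv 0 * a j : ℤ) : ℚ) := Finset.sum_add_distrib
      _ = (∑ j, (a j : ℚ))/r + ∑ j, ((zv j - zv 0 * a j : ℤ) : ℚ) := by
          rw [Finset.sum_div]
  have h2le : (2:ℚ) ≤ (∑ j, (a j : ℚ))/r := by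
    rw [le_div_iff₀ hrQ]
    have : (2 * r : ℚ) ≤ ∑ j, (a j : ℚ) := by
      exact_mod_cast hage
    linarith
  have hwsum : (0:ℚ) ≤ ∑ j, ((zv j - zv 0 * a j : ℤ) : ℚ) :=
    Finset.sum_nonneg (fun j _ => hwpos j)
  rw [hqsum] at hsum
  linarith
end

section
/- Assume a_i ≥ 1. Then the ℚ-linear map φ_i is injective and φ_i(N_i) = N'; that is, φ_i restricts to an isomorphism of ℤ-modules from N_i onto N'. In particular, the image under φ_i of any ℤ-basis of N_i is a ℤ-basis of N'. (Step (ii) in the proof of Proposition 3.3.) -/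
/-!
`φ_i` fixes `e_j` for `j ≠ i` and sends `e_i` to `g`. Division with remainder by `a_i` gives
`φ_i(ḡ_i) = q • g + w - e_i` with `q ∈ ℤ` and `w` an integer vector with `w_i = 0`, which `φ_i`
therefore fixes. Hence `φ_i(ḡ_i) ∈ N'`, and conversely `e_i = φ_i(q • e_i + w - ḡ_i) ∈ φ_i(N_i)`.
-/

open Submodule Set

variable {ι : Type*} [DecidableEq ι]

section ReplaceBasisVec

variable {K : Type*} [CommRing K]

def replaceBasisVec (i : ι) (c : ι → K) : (ι → K) →ₗ[K] ι → K where
  toFun x j := if j = i then c i * x i else x j + c j * x i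
  map_add' x y := by ext j; by_cases hj : j = i <;> simp [hj] <;> ring
  map_smul' t x := by ext j; by_cases hj : j = i <;> simp [hj] <;> ring

variable {i : ι} {c : ι → K}

theorem replaceBasisVec_apply (x : ι → K) (j : ι) :
    replaceBasisVec i c x j = if j = i then c i * x i else x j + c j * x i := rfl

theorem replaceBasisVec_of_apply_eq_zero {x : ι → K} (hx : x i = 0) :
    replaceBasisVec i c x = x := by
  ext j; by_cases hj : j = i <;> simp [replaceBasisVec_apply, hj, hx]

theorem replaceBasisVec_single_self : replaceBasisVec i c (Pi.single i 1) = c := by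
  ext j; by_cases hj : j = i <;> simp [replaceBasisVec_apply, hj]

theorem replaceBasisVec_single_of_ne {j : ι} (hj : j ≠ i) :
    replaceBasisVec i c (Pi.single j 1) = Pi.single j 1 :=
  replaceBasisVec_of_apply_eq_zero (Pi.single_eq_of_ne' hj 1)

theorem replaceBasisVec_injective {K : Type*} [Field K] {c : ι → K} (hc : c i ≠ 0) :
    Function.Injective (replaceBasisVec i c) := by
  intro x y hxy
  have hi : x i = y i :=
    mul_left_cancel₀ hc (by simpa [replaceBasisVec_apply] using congrFun hxy i)
  ext j
  by_cases hj : j = i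
  · rw [hj, hi]
  · simpa [replaceBasisVec_apply, hj, hi] using congrFun hxy j

end ReplaceBasisVec

section Lattice

variable {R K : Type*}

theorem algebraMap_mem_span_range_single [Fintype ι] [CommSemiring R] [Semiring K]
    [Algebra R K] (w : ι → R) :
    (fun j => algebraMap R K (w j)) ∈ span R (range fun j => (Pi.single j 1 : ι → K)) := by
  rw [mem_span_range_iff_exists_fun]
  refine ⟨w, ?_⟩
  simp_rw [← Pi.single_smul', ← Algebra.algebraMap_eq_smul_one]
  exact Finset.univ_sum_single _

variable [CommRing R] [CommRing K] [Algebra R K]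

theorem map_replaceBasisVec_span_insert {i : ι} {c y w : ι → K} (q : R)
    (hw : w ∈ span R (range fun j => (Pi.single j 1 : ι → K))) (hwi : w i = 0)
    (hy : replaceBasisVec i c y = q • c + w - Pi.single i 1) :
    (span R (insert y (range fun j => (Pi.single j 1 : ι → K)))).map
        ((replaceBasisVec i c).restrictScalars R) =
      span R (insert c (range fun j => (Pi.single j 1 : ι → K))) := by
  set f := (replaceBasisVec i c).restrictScalars R
  have head_mem {s : ι → K} : s ∈ span R (insert s (range fun j => Pi.single j 1)) :=
    subset_span (mem_insert _ _)
  have single_mem {s : ι → K} (j : ι) :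
      Pi.single j 1 ∈ span R (insert s (range fun j => Pi.single j 1)) :=
    subset_span (mem_insert_of_mem _ ⟨j, rfl⟩)
  have hw' {s : ι → K} : w ∈ span R (insert s (range fun j => Pi.single j 1)) :=
    span_mono (subset_insert _ _) hw
  apply le_antisymm
  · rw [map_le_iff_le_comap, span_le]
    rintro _ (hx | ⟨j, rfl⟩) <;> rw [SetLike.mem_coe, mem_comap]
    · rw [hx, LinearMap.restrictScalars_apply, hy]
      exact sub_mem (add_mem (smul_mem _ q head_mem) hw') (single_mem i)
    · rw [LinearMap.restrictScalars_apply]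
      by_cases hj : j = i
      · rw [hj, replaceBasisVec_single_self]
        exact head_mem
      · rw [replaceBasisVec_single_of_ne hj]
        exact single_mem j
  · rw [span_le]
    rintro _ (hx | ⟨j, rfl⟩) <;> rw [SetLike.mem_coe]
    · rw [hx, ← replaceBasisVec_single_self (i := i) (c := c)]
      exact mem_map_of_mem (f := f) (single_mem i)
    · beta_reduce
      by_cases hj : j = i
      · have hsingle : f (q • (Pi.single i 1 : ι → K) + w - y) = Pi.single i 1 := by
          simp only [f, map_sub, map_add, LinearMap.map_smul_of_tower,
            LinearMap.restrictScalars_apply, replaceBasisVec_single_self,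
            replaceBasisVec_of_apply_eq_zero hwi, hy]
          abel
        rw [hj, ← hsingle]
        exact mem_map_of_mem (sub_mem (add_mem (smul_mem _ q (single_mem i)) hw') head_mem)
      · rw [← replaceBasisVec_single_of_ne hj]
        exact mem_map_of_mem (f := f) (single_mem j)

end Lattice

section Remainder

def remainderVec (r : ℕ) (a : ι → ℕ) (i : ι) : ι → ℚ := fun j =>
  if j = i then (((-(r : ℤ)) % (a i : ℤ) : ℤ) : ℚ) / a i else ((a j % a i : ℕ) : ℚ) / a i

theorem replaceBasisVec_remainderVec {r : ℕ} {a : ι → ℕ} {i : ι} (hr : r ≠ 0) (hai : a i ≠ 0) :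
    replaceBasisVec i (fun j => (a j : ℚ) / r) (remainderVec r a i) =
      (-((-(r : ℤ)) / a i)) • (fun j => (a j : ℚ) / r) +
        (fun j => ((if j = i then 0 else -((a j : ℤ) / a i) : ℤ) : ℚ)) - Pi.single i 1 := by
  have hmod (x : ℤ) : ((x % a i : ℤ) : ℚ) = x - a i * (x / a i : ℤ) := by
    rw [Int.emod_def]; push_cast; ring
  ext j
  by_cases hj : j = i
  · subst hj
    simp only [replaceBasisVec_apply, ↓reduceIte, remainderVec, hmod, Int.cast_neg,
      Int.cast_natCast, neg_smul, zsmul_eq_mul, Int.cast_ite, Int.cast_zero, Pi.sub_apply,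
      Pi.add_apply, Pi.neg_apply, Pi.mul_apply, Pi.intCast_apply, add_zero, Pi.single_eq_same]
    field_simp
    ring
  · simp only [replaceBasisVec_apply, hj, ↓reduceIte, remainderVec,
      ← Int.cast_natCast (R := ℚ) (a j % a i), Int.natCast_emod, hmod, Int.cast_natCast,
      Int.cast_neg, neg_smul, zsmul_eq_mul, Int.cast_ite, Int.cast_zero, Pi.sub_apply,
      Pi.add_apply, Pi.neg_apply, Pi.mul_apply, Pi.intCast_apply, ne_eq, not_false_eq_true,
      Pi.single_eq_of_ne, sub_zero]
    field_simp
    ring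

end Remainder

theorem phi_injective_and_maps_Ni_onto_N'_general
    {m : ℕ} (r : ℕ) (hr : 1 ≤ r) (a : Fin (m + 2) → ℕ)
    (i : Fin (m + 2)) (hai : 1 ≤ a i) :
    Function.Injective
        (fun (x : Fin (m + 2) → ℚ) (j : Fin (m + 2)) =>
          if j = i then ((a i : ℚ) / r) * x i else x j + ((a j : ℚ) / r) * x i) ∧
      (fun (x : Fin (m + 2) → ℚ) (j : Fin (m + 2)) =>
            if j = i then ((a i : ℚ) / r) * x i else x j + ((a j : ℚ) / r) * x i) ''
          (Submodule.span ℤ (insert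
              (fun j => if j = i then (((-(r : ℤ)) % (a i : ℤ) : ℤ) : ℚ) / (a i)
                else ((a j % a i : ℕ) : ℚ) / (a i))
              (Set.range fun j : Fin (m + 2) => (Pi.single j 1 : Fin (m + 2) → ℚ))) :
            Set (Fin (m + 2) → ℚ))
        = (Submodule.span ℤ (insert (fun j => (a j : ℚ) / r)
            (Set.range fun j : Fin (m + 2) => (Pi.single j 1 : Fin (m + 2) → ℚ))) :
            Set (Fin (m + 2) → ℚ)) := by
  have hr0 : r ≠ 0 := Nat.one_le_iff_ne_zero.mp hr
  have hai0 : a i ≠ 0 := Nat.one_le_iff_ne_zero.mp hai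
  refine ⟨replaceBasisVec_injective (c := fun j => (a j : ℚ) / r) (by positivity), ?_⟩
  have hw := algebraMap_mem_span_range_single (K := ℚ)
    fun j => if j = i then 0 else -((a j : ℤ) / a i)
  have hmap := congrArg ((↑) : Submodule ℤ _ → Set (Fin (m + 2) → ℚ))
    (map_replaceBasisVec_span_insert _ hw (by simp) (replaceBasisVec_remainderVec hr0 hai0))
  rwa [map_coe] at hmap

/-- Suppose `a_1 = 1`, `0 ≤ a_j ≤ r − 1`, `2 ≤ i ≤ n` and `a_i ≥ 1`.
Let `N' = ℤe_1 + ⋯ + ℤe_n + ℤ·(1/r)(1, a_2, …, a_n)` and let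
`N_i = ℤe_1 + ⋯ + ℤe_n + ℤ·ḡ_i`, where `ḡ_i` has `j`-th coordinate `(a_j mod a_i)/a_i`
for `j ≠ i` and `i`-th coordinate `((−r) mod a_i)/a_i`.  Then the `ℚ`-linear map
`φ_i : ℚⁿ → ℚⁿ`, `(φ_i(x))_j = x_j + (a_j/r)·x_i` for `j ≠ i`,
`(φ_i(x))_i = (a_i/r)·x_i`, is injective and maps `N_i` onto `N'`; in particular it
restricts to an isomorphism of `ℤ`-modules from `N_i` onto `N'`. -/
theorem phi_injective_and_maps_Ni_onto_N'
    {m : ℕ} (r : ℕ) (hr : 1 ≤ r) (a : Fin (m + 2) → ℕ)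
    (ha0 : a 0 = 1) (ha : ∀ j, a j < r)
    (i : Fin (m + 2)) (hi : i ≠ 0) (hai : 1 ≤ a i) :
    Function.Injective
        (fun (x : Fin (m + 2) → ℚ) (j : Fin (m + 2)) =>
          if j = i then ((a i : ℚ) / r) * x i else x j + ((a j : ℚ) / r) * x i) ∧
      (fun (x : Fin (m + 2) → ℚ) (j : Fin (m + 2)) =>
            if j = i then ((a i : ℚ) / r) * x i else x j + ((a j : ℚ) / r) * x i) ''
          (Submodule.span ℤ (insert
              (fun j => if j = i then (((-(r : ℤ)) % (a i : ℤ) : ℤ) : ℚ) / (a i)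
                else ((a j % a i : ℕ) : ℚ) / (a i))
              (Set.range fun j : Fin (m + 2) => (Pi.single j 1 : Fin (m + 2) → ℚ))) :
            Set (Fin (m + 2) → ℚ))
        = (Submodule.span ℤ (insert (fun j => (a j : ℚ) / r)
            (Set.range fun j : Fin (m + 2) => (Pi.single j 1 : Fin (m + 2) → ℚ))) :
            Set (Fin (m + 2) → ℚ)) :=
  phi_injective_and_maps_Ni_onto_N'_general r hr a i hai
end

section
/- Define a relation Step on triples of nonnegative integers by: Step (s, c, d) (c, (−s) mod c, d mod c) whenever c ≥ 1, and Step (s, c, d) (d, c mod d, (−s) mod d) whenever d ≥ 1. Let r, a, b be nonnegative integers, with a and b arbitrary, such that 1 + a + b = r. Then every triple (s, c, d) reachable from (r, a, b) by the reflexive–transitive closure of Step satisfies 1 + c + d = s. -/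
/-- One step of the remainder maps on triples `(s, c, d)` of nonnegative integers, where
`(s, c, d)` encodes the three-dimensional proper fraction `(1, c, d)/s`:
`R_2` sends `(s, c, d)` to `(c, (−s) mod c, d mod c)` when `c ≥ 1`, and
`R_3` sends `(s, c, d)` to `(d, c mod d, (−s) mod d)` when `d ≥ 1`. -/
def Step (p q : ℕ × ℕ × ℕ) : Prop :=
  (1 ≤ p.2.1 ∧ q = (p.2.1, ((-(p.1 : ℤ)) % (p.2.1 : ℤ)).toNat, p.2.2 % p.2.1)) ∨
  (1 ≤ p.2.2 ∧ q = (p.2.2, p.2.1 % p.2.2, ((-(p.1 : ℤ)) % (p.2.2 : ℤ)).toNat))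

lemma key_arith (s c d : ℕ) (hc : 1 ≤ c) (h : 1 + c + d = s) :
    1 + ((-(s : ℤ)) % (c : ℤ)).toNat + d % c = c := by
  have hcz : (0 : ℤ) < (c : ℤ) := by exact_mod_cast hc
  set x := (-(s : ℤ)) % (c : ℤ) with hxdef
  set y := ((d : ℤ)) % (c : ℤ) with hydef
  have hx0 : 0 ≤ x := Int.emod_nonneg _ (by positivity)
  have hx1 : x < c := Int.emod_lt_of_pos _ hcz
  have hy0 : 0 ≤ y := Int.emod_nonneg _ (by positivity)
  have hy1 : y < c := Int.emod_lt_of_pos _ hcz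
  have hs : (s : ℤ) = 1 + c + d := by exact_mod_cast h.symm
  have hsum : x + y + 1 = (c : ℤ) * (-((-(s : ℤ)) / c + (d : ℤ) / c + 1)) := by
    rw [hxdef, hydef, Int.emod_def, Int.emod_def, hs]; ring
  set t := -((-(s : ℤ)) / c + (d : ℤ) / c + 1) with htdef
  have ht1 : 1 ≤ t := by nlinarith
  have ht2 : t < 2 := by nlinarith
  have ht : t = 1 := by omega
  rw [ht, mul_one] at hsum
  have hy' : y = ((d % c : ℕ) : ℤ) := by
    rw [hydef]; exact (Int.natCast_mod d c).symm
  have hxt : (x.toNat : ℤ) = x := Int.toNat_of_nonneg hx0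
  omega

lemma step_inv {p q : ℕ × ℕ × ℕ} (h : Step p q) (hp : 1 + p.2.1 + p.2.2 = p.1) :
    1 + q.2.1 + q.2.2 = q.1 := by
  obtain ⟨p1, p2, p3⟩ := p
  replace hp : 1 + p2 + p3 = p1 := hp
  rcases h with ⟨hc, rfl⟩ | ⟨hd, rfl⟩
  · simpa using key_arith p1 p2 p3 hc hp
  · have := key_arith p1 p3 p2 hd (by omega)
    show 1 + p2 % p3 + ((-(p1 : ℤ)) % (p3 : ℤ)).toNat = p3
    omega

/-- **combinatorial content of Corollary 3.5.** If `1 + a + b = r`, then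
every triple `(s, c, d)` reachable from `(r, a, b)` by finitely many applications of the
remainder maps satisfies `1 + c + d = s`; i.e. every coefficient of the remainder
polynomial `𝓡_*((1, a, b)/r)` of a three-dimensional Gorenstein cyclic quotient
singularity has age `1`. -/
theorem remainder_polynomial_all_ages_one
    (r a b : ℕ) (h : 1 + a + b = r) (p : ℕ × ℕ × ℕ)
    (hp : Relation.ReflTransGen Step (r, a, b) p) :
    1 + p.2.1 + p.2.2 = p.1 := by
  induction hp with
  | refl => simpa using h
  | tail _ hstep ih => exact step_inv hstep ih
end

section
/- Assume r ≥ 2, fix i ∈ {2, …, n}, and fix an integer k with 1 ≤ k ≤ r − 1. Let u = (1/r)(k, a_2·k mod r, a_3·k mod r, …, a_n·k mod r) ∈ ℚ^n (the i-th minimal point associated to k; note u ∈ N'), let A = ℤ² + ℤ·(1/r)(1, a_i) ⊆ ℚ², and let v = (1/r)(k, a_i·k mod r) ∈ ℚ². Suppose v cannot be written as X + Y with X, Y ∈ A both having nonnegative coordinates and both nonzero (i.e. v belongs to the Hilbert basis of the nonnegative quadrant with respect to A). Then u cannot be written as X + Y with X, Y ∈ N' both having nonnegative coordinates and both nonzero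 (i.e. u belongs to the Hilbert basis Hlb_{N'}(σ) of the nonnegative orthant σ with respect to N'). -/
/-!
Write a point of `N'` as `c g + z` with `c ∈ ℤ`, `z ∈ ℤⁿ`. Every coordinate of `u` lies in
`[0, 1)`, hence so does every coordinate of a summand `X` of `u`. If `X₁ = 0`, then
`c / r = -z₁ ∈ ℤ` because `a₁ = 1`, so `X` is integral and therefore `0`. Hence both summands
of a decomposition of `u` have nonzero first coordinate, and projecting onto the coordinates
`1` and `i`, which maps `N'` into `A`, decomposes `v`.
-/

open Submodule Set

abbrev latticeAdjoin {ι : Type*} [DecidableEq ι] (g : ι → ℚ) : Submodule ℤ (ι → ℚ) :=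
  span ℤ (insert g (range fun j : ι => (Pi.single j 1 : ι → ℚ)))

namespace latticeAdjoin

variable {ι κ : Type*} [DecidableEq ι] [DecidableEq κ]

lemma exists_int_of_mem_span_single {z : ι → ℚ}
    (hz : z ∈ span ℤ (range fun j : ι => (Pi.single j 1 : ι → ℚ))) (j : ι) :
    ∃ n : ℤ, z j = n := by
  induction hz using span_induction with
  | mem y hy =>
    obtain ⟨j', rfl⟩ := hy
    by_cases h : j = j'
    exacts [⟨1, by simp [h]⟩, ⟨0, by simp [h]⟩]
  | zero => exact ⟨0, by simp⟩
  | add y y' _ _ hy hy' =>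
    obtain ⟨n, hn⟩ := hy
    obtain ⟨n', hn'⟩ := hy'
    exact ⟨n + n', by simp [hn, hn']⟩
  | smul c y _ hy =>
    obtain ⟨n, hn⟩ := hy
    exact ⟨c * n, by simp [hn]⟩

lemma exists_int_coords {g x : ι → ℚ} (hx : x ∈ latticeAdjoin g) :
    ∃ (c : ℤ) (z : ι → ℤ), ∀ j, x j = c * g j + z j := by
  obtain ⟨c, y, hy, rfl⟩ := mem_span_insert.mp hx
  choose z hz using exists_int_of_mem_span_single hy
  exact ⟨c, z, fun j => by simp [hz j]⟩

lemma exists_int_of_apply_eq_zero {r : ℕ} {a : ι → ℕ} {i₀ : ι} (ha : a i₀ = 1)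
    {x : ι → ℚ} (hx : x ∈ latticeAdjoin fun j => (a j : ℚ) / r) (hx₀ : x i₀ = 0) (j : ι) :
    ∃ n : ℤ, x j = n := by
  obtain ⟨c, z, hcz⟩ := exists_int_coords hx
  have hc : (c : ℚ) / r = -z i₀ := by
    have := hcz i₀
    rw [hx₀, ha, Nat.cast_one] at this
    linear_combination -this
  refine ⟨-z i₀ * a j + z j, ?_⟩
  rw [hcz j, mul_div_assoc', mul_comm, mul_div_assoc, hc]
  push_cast
  ring

lemma apply_ne_zero_of_lt_one {r : ℕ} {a : ι → ℕ} {i₀ : ι} (ha : a i₀ = 1)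
    {x : ι → ℚ} (hx : x ∈ latticeAdjoin fun j => (a j : ℚ) / r)
    (h0 : ∀ j, 0 ≤ x j) (h1 : ∀ j, x j < 1) (hne : x ≠ 0) : x i₀ ≠ 0 := by
  intro hx₀
  refine hne (funext fun j => ?_)
  obtain ⟨n, hn⟩ := exists_int_of_apply_eq_zero ha hx hx₀ j
  have h0 := h0 j
  have h1 := h1 j
  rw [hn] at h0 h1 ⊢
  norm_cast at h0 h1 ⊢
  simp only [Pi.zero_apply, Int.cast_eq_zero]
  omega

lemma comp_mem {g x : ι → ℚ} (hx : x ∈ latticeAdjoin g) {f : κ → ι} (hf : f.Injective) :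
    x ∘ f ∈ latticeAdjoin (g ∘ f) := by
  suffices latticeAdjoin g ≤ (latticeAdjoin (g ∘ f)).comap (LinearMap.funLeft ℤ ℚ f) from this hx
  refine span_le.mpr (insert_subset_iff.mpr ⟨subset_span (mem_insert _ _), ?_⟩)
  rintro _ ⟨j, rfl⟩
  by_cases hj : j ∈ range f
  · obtain ⟨t, rfl⟩ := hj
    have : Pi.single (f t) (1 : ℚ) ∘ f = Pi.single t 1 := by
      funext s
      simp [Pi.single_apply, hf.eq_iff]
    exact subset_span (mem_insert_of_mem _ ⟨t, this.symm⟩)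
  · have : Pi.single j (1 : ℚ) ∘ f = 0 := by
      funext s
      simp only [Function.comp_apply, Pi.single_apply, Pi.zero_apply, ite_eq_right_iff]
      exact fun h => absurd ⟨s, h⟩ hj
    simp [LinearMap.funLeft, this]

end latticeAdjoin

theorem minimal_point_mem_hilbert_basis_general
    {m : ℕ} (r : ℕ) (hr : 2 ≤ r) (a : Fin (m + 2) → ℕ)
    (ha0 : a 0 = 1)
    (i : Fin (m + 2)) (hi : i ≠ 0)
    (k : ℕ) (hk2 : k ≤ r - 1)
    (hv : ¬ ∃ X Y : Fin 2 → ℚ,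
      X ∈ Submodule.span ℤ (insert ![(1 : ℚ) / r, (a i : ℚ) / r]
            (Set.range fun t : Fin 2 => (Pi.single t 1 : Fin 2 → ℚ))) ∧
      Y ∈ Submodule.span ℤ (insert ![(1 : ℚ) / r, (a i : ℚ) / r]
            (Set.range fun t : Fin 2 => (Pi.single t 1 : Fin 2 → ℚ))) ∧
      (∀ t, 0 ≤ X t) ∧ (∀ t, 0 ≤ Y t) ∧ X ≠ 0 ∧ Y ≠ 0 ∧
      ![(k : ℚ) / r, ((a i * k % r : ℕ) : ℚ) / r] = X + Y) :
    ¬ ∃ X Y : Fin (m + 2) → ℚ,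
      X ∈ Submodule.span ℤ (insert (fun j => (a j : ℚ) / r)
            (Set.range fun j : Fin (m + 2) => (Pi.single j 1 : Fin (m + 2) → ℚ))) ∧
      Y ∈ Submodule.span ℤ (insert (fun j => (a j : ℚ) / r)
            (Set.range fun j : Fin (m + 2) => (Pi.single j 1 : Fin (m + 2) → ℚ))) ∧
      (∀ j, 0 ≤ X j) ∧ (∀ j, 0 ≤ Y j) ∧ X ≠ 0 ∧ Y ≠ 0 ∧
      (fun j : Fin (m + 2) =>
          if j = 0 then (k : ℚ) / r else ((a j * k % r : ℕ) : ℚ) / r) = X + Y := by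
  rintro ⟨X, Y, hX, hY, hX0, hY0, hXne, hYne, hsum⟩
  have hsum_lt : ∀ j, X j + Y j < 1 := by
    intro j
    rw [← Pi.add_apply, ← hsum]
    dsimp only
    split_ifs <;> rw [div_lt_one (by positivity)]
    · exact_mod_cast (by omega : k < r)
    · exact_mod_cast Nat.mod_lt _ (by omega)
  have hX1 : ∀ j, X j < 1 := fun j => by linarith [hsum_lt j, hY0 j]
  have hY1 : ∀ j, Y j < 1 := fun j => by linarith [hsum_lt j, hX0 j]
  have hproj : Function.Injective ![0, i] := injective_pair_iff_ne.mpr hi.symm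
  have hmem : ∀ x ∈ latticeAdjoin fun j => (a j : ℚ) / r,
      x ∘ ![0, i] ∈ latticeAdjoin ![(1 : ℚ) / r, (a i : ℚ) / r] := by
    intro x hx
    convert latticeAdjoin.comp_mem hx hproj using 2
    ext t
    fin_cases t <;> simp [ha0]
  apply hv
  refine ⟨X ∘ ![0, i], Y ∘ ![0, i], hmem X hX, hmem Y hY, fun _ => hX0 _, fun _ => hY0 _,
    fun h => latticeAdjoin.apply_ne_zero_of_lt_one ha0 hX hX0 hX1 hXne (congrFun h 0),
    fun h => latticeAdjoin.apply_ne_zero_of_lt_one ha0 hY hY0 hY1 hYne (congrFun h 0), ?_⟩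
  ext t
  fin_cases t
  · simpa using congrFun hsum 0
  · simpa [hi] using congrFun hsum i

/-- Let `N' = ℤe_1 + ⋯ + ℤe_n + ℤ·(1/r)(1, a_2, …, a_n) ⊆ ℚⁿ` with
`n ≥ 2` (written `n = m + 2`), `r ≥ 2`, `a_1 = 1`, `0 ≤ a_j ≤ r − 1`, and fix
`i ∈ {2, …, n}` and `1 ≤ k ≤ r − 1`.  Let
`u = (1/r)(k, a_2·k mod r, …, a_n·k mod r) ∈ N'` be the `i`-th minimal point,
`A = ℤ² + ℤ·(1/r)(1, a_i) ⊆ ℚ²` and `v = (1/r)(k, a_i·k mod r)`.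
If `v` is not the sum of two nonzero elements of `A` with nonnegative coordinates
(i.e. `v` is in the Hilbert basis of the nonnegative quadrant w.r.t. `A`), then `u` is not
the sum of two nonzero elements of `N'` with nonnegative coordinates (i.e. `u` is in the
Hilbert basis `Hlb_{N'}(σ)` of the nonnegative orthant `σ` w.r.t. `N'`). -/
theorem minimal_point_mem_hilbert_basis
    {m : ℕ} (r : ℕ) (hr : 2 ≤ r) (a : Fin (m + 2) → ℕ)
    (ha0 : a 0 = 1) (ha : ∀ j, a j < r)
    (i : Fin (m + 2)) (hi : i ≠ 0)
    (k : ℕ) (hk1 : 1 ≤ k) (hk2 : k ≤ r - 1)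
    (hv : ¬ ∃ X Y : Fin 2 → ℚ,
      X ∈ Submodule.span ℤ (insert ![(1 : ℚ) / r, (a i : ℚ) / r]
            (Set.range fun t : Fin 2 => (Pi.single t 1 : Fin 2 → ℚ))) ∧
      Y ∈ Submodule.span ℤ (insert ![(1 : ℚ) / r, (a i : ℚ) / r]
            (Set.range fun t : Fin 2 => (Pi.single t 1 : Fin 2 → ℚ))) ∧
      (∀ t, 0 ≤ X t) ∧ (∀ t, 0 ≤ Y t) ∧ X ≠ 0 ∧ Y ≠ 0 ∧
      ![(k : ℚ) / r, ((a i * k % r : ℕ) : ℚ) / r] = X + Y) :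
    ¬ ∃ X Y : Fin (m + 2) → ℚ,
      X ∈ Submodule.span ℤ (insert (fun j => (a j : ℚ) / r)
            (Set.range fun j : Fin (m + 2) => (Pi.single j 1 : Fin (m + 2) → ℚ))) ∧
      Y ∈ Submodule.span ℤ (insert (fun j => (a j : ℚ) / r)
            (Set.range fun j : Fin (m + 2) => (Pi.single j 1 : Fin (m + 2) → ℚ))) ∧
      (∀ j, 0 ≤ X j) ∧ (∀ j, 0 ≤ Y j) ∧ X ≠ 0 ∧ Y ≠ 0 ∧
      (fun j : Fin (m + 2) =>
          if j = 0 then (k : ℚ) / r else ((a j * k % r : ℕ) : ℚ) / r) = X + Y :=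
  minimal_point_mem_hilbert_basis_general r hr a ha0 i hi k hk2 hv
end
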